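/- Let G be a graph with a vector k-coloring {v_i} (real k > 2), maximum degree Δ, and n vertices. Choose a random Gaussian vector r and a threshold c > 0; let n' be the number of vertices with ⟨v_i, r⟩ ≥ c and m' the number of edges with both endpoints selected. Then E[n' - m'] ≥ n(N(c) - (Δ/2) N(ac)), where a = sqrt(2(k-1)/(k-2)) and N is the standard normal tail. -/

import Mathlib

/-!
Each `⟨v i, r⟩` is a standard Gaussian, so a vertex is selected with probability `N c`. If both
ends of an edge are selected then `⟨v i + v j, r⟩ ≥ 2c`, and `⟨v i + v j, r⟩` is centred Gaussian
with variance `‖v i + v j‖² = 2 + 2⟪v i, v j⟫ ≤ 2(k-2)/(k-1) = 4/a²`, so this has probability at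
most `N (a c)`. Linearity of expectation and `m ≤ nΔ/2` finish the proof.
-/

open MeasureTheory ProbabilityTheory Real
open scoped RealInnerProductSpace Classical NNReal

lemma sqrt_mul_norm_add_le_two {E : Type*} [NormedAddCommGroup E] [InnerProductSpace ℝ E]
    {k : ℝ} (hk : 2 < k) {x y : E} (hx : ‖x‖ = 1) (hy : ‖y‖ = 1)
    (hxy : ⟪x, y⟫ ≤ -1 / (k - 1)) :
    √(2 * (k - 1) / (k - 2)) * ‖x + y‖ ≤ 2 := by
  have hk1 : 0 < k - 1 := by linarith
  have hk2 : 0 < k - 2 := by linarith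
  have hxy' : ⟪x, y⟫ * (k - 1) ≤ -1 := (le_div_iff₀ hk1).mp hxy
  rw [← Real.sqrt_sq (norm_nonneg (x + y)), ← Real.sqrt_mul (by positivity),
    Real.sqrt_le_left zero_le_two, norm_add_sq_real, hx, hy, div_mul_eq_mul_div,
    div_le_iff₀ hk2]
  nlinarith

namespace ProbabilityTheory

lemma gaussianReal_Ici_le_of_mul_le {σ : ℝ≥0} {s t : ℝ} (ht : 0 < t) (h : s * σ ≤ t) :
    gaussianReal 0 (σ ^ 2) (Set.Ici t) ≤ gaussianReal 0 1 (Set.Ici s) := by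
  have hscale : gaussianReal 0 (σ ^ 2) = (gaussianReal 0 1).map ((σ : ℝ) * ·) := by
    rw [gaussianReal_map_const_mul, mul_zero, mul_one]
    congr
  rw [hscale, Measure.map_apply (measurable_const_mul _) measurableSet_Ici]
  refine measure_mono fun x hx => ?_
  simp only [Set.mem_preimage, Set.mem_Ici] at hx ⊢
  by_contra! hxs
  have hσ : (0 : ℝ) < σ := by
    by_contra! hσ
    rw [le_antisymm hσ σ.coe_nonneg, zero_mul] at hx
    linarith
  nlinarith [mul_lt_mul_of_pos_left hxs hσ]

variable {ι Ω : Type*} [MeasurableSpace Ω] {μ : Measure Ω} {r : ι → Ω → ℝ}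

lemma map_mul_eq_gaussianReal {X : Ω → ℝ} (hX : Measurable X)
    (hlaw : μ.map X = gaussianReal 0 1) (w : ℝ) :
    μ.map (fun ω => w * X ω) = gaussianReal 0 (‖w‖₊ ^ 2) := by
  change μ.map ((w * ·) ∘ X) = _
  rw [← Measure.map_map (measurable_const_mul w) hX, hlaw, gaussianReal_map_const_mul, mul_zero,
    mul_one]
  congr 1
  ext
  simp

variable [IsProbabilityMeasure μ]

lemma iIndepFun.map_finsetSum_mul_eq_gaussianReal (hmeas : ∀ i, Measurable (r i))
    (hindep : iIndepFun r μ) (hlaw : ∀ i, μ.map (r i) = gaussianReal 0 1) (w : ι → ℝ)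
    (s : Finset ι) :
    μ.map (fun ω => ∑ j ∈ s, w j * r j ω) = gaussianReal 0 (∑ j ∈ s, ‖w j‖₊ ^ 2) := by
  classical
  induction s using Finset.induction_on with
  | empty => simp [Measure.map_const, gaussianReal_zero_var]
  | insert i s hi ih =>
    have hindep_i : IndepFun (fun ω => w i * r i ω) (fun ω => ∑ j ∈ s, w j * r j ω) μ := by
      have := (hindep.comp (fun j x => w j * x) fun j => measurable_const_mul _
        ).indepFun_finsetSum_of_notMem (fun j => (hmeas j).const_mul _) hi
      simpa [Finset.sum_fn, Function.comp_def] using this.symm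
    simpa only [Finset.sum_insert hi, Pi.add_def, add_zero] using
      gaussianReal_add_gaussianReal_of_indepFun hindep_i
        (map_mul_eq_gaussianReal (hmeas i) (hlaw i) (w i)) ih

lemma iIndepFun.map_sum_mul_eq_gaussianReal [Fintype ι] (hmeas : ∀ i, Measurable (r i))
    (hindep : iIndepFun r μ) (hlaw : ∀ i, μ.map (r i) = gaussianReal 0 1)
    (w : EuclideanSpace ℝ ι) :
    μ.map (fun ω => ∑ j, w j * r j ω) = gaussianReal 0 (‖w‖₊ ^ 2) := by
  rw [hindep.map_finsetSum_mul_eq_gaussianReal hmeas hlaw, EuclideanSpace.nnnorm_eq,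
    NNReal.sq_sqrt]

variable [Fintype ι]

lemma iIndepFun.measure_ge_eq_gaussianReal_Ici (hmeas : ∀ i, Measurable (r i))
    (hindep : iIndepFun r μ) (hlaw : ∀ i, μ.map (r i) = gaussianReal 0 1)
    (w : EuclideanSpace ℝ ι) (t : ℝ) :
    μ {ω | t ≤ ∑ j, w j * r j ω} = gaussianReal 0 (‖w‖₊ ^ 2) (Set.Ici t) := by
  rw [← hindep.map_sum_mul_eq_gaussianReal hmeas hlaw w,
    Measure.map_apply (Finset.measurable_sum _ fun j _ => (hmeas j).const_mul _)
      measurableSet_Ici]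
  rfl

lemma iIndepFun.measure_both_ge_le_gaussianReal_Ici (hmeas : ∀ i, Measurable (r i))
    (hindep : iIndepFun r μ) (hlaw : ∀ i, μ.map (r i) = gaussianReal 0 1)
    {x y : EuclideanSpace ℝ ι} {c s : ℝ} (hc : 0 < c) (hs : s * ‖x + y‖ ≤ 2 * c) :
    μ {ω | c ≤ ∑ j, x j * r j ω ∧ c ≤ ∑ j, y j * r j ω} ≤ gaussianReal 0 1 (Set.Ici s) :=
  calc μ {ω | c ≤ ∑ j, x j * r j ω ∧ c ≤ ∑ j, y j * r j ω}
      ≤ μ {ω | 2 * c ≤ ∑ j, (x + y) j * r j ω} := by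
        refine measure_mono fun ω ⟨hx, hy⟩ => ?_
        simp only [PiLp.add_apply, add_mul, Finset.sum_add_distrib, Set.mem_ofPred_eq]
        linarith
    _ = gaussianReal 0 (‖x + y‖₊ ^ 2) (Set.Ici (2 * c)) :=
        hindep.measure_ge_eq_gaussianReal_Ici hmeas hlaw _ _
    _ ≤ gaussianReal 0 1 (Set.Ici s) := gaussianReal_Ici_le_of_mul_le (by positivity) hs

lemma iIndepFun.measure_both_ge_le_of_inner_le (hmeas : ∀ i, Measurable (r i))
    (hindep : iIndepFun r μ) (hlaw : ∀ i, μ.map (r i) = gaussianReal 0 1)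
    {x y : EuclideanSpace ℝ ι} {k c : ℝ} (hk : 2 < k) (hc : 0 < c) (hx : ‖x‖ = 1)
    (hy : ‖y‖ = 1) (hxy : ⟪x, y⟫ ≤ -1 / (k - 1)) :
    μ {ω | c ≤ ∑ j, x j * r j ω ∧ c ≤ ∑ j, y j * r j ω} ≤
      gaussianReal 0 1 (Set.Ici (√(2 * (k - 1) / (k - 2)) * c)) :=
  hindep.measure_both_ge_le_gaussianReal_Ici hmeas hlaw hc
    (by nlinarith [sqrt_mul_norm_add_le_two hk hx hy hxy])

end ProbabilityTheory

lemma natCast_card_filter_eq_sum_indicator {ι Ω : Type*} (s : Finset ι) (p : ι → Ω → Prop)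
    [∀ i ω, Decidable (p i ω)] (ω : Ω) :
    ((s.filter (p · ω)).card : ℝ) = ∑ i ∈ s, {ω | p i ω}.indicator 1 ω := by
  rw [Finset.card_filter]
  push_cast
  simp [Set.indicator_apply]

section CardFilter

variable {ι Ω : Type*} [MeasurableSpace Ω] (μ : Measure Ω) [IsFiniteMeasure μ] (s : Finset ι)
  {p : ι → Ω → Prop} [∀ i ω, Decidable (p i ω)]

lemma integrable_card_filter (hp : ∀ i ∈ s, MeasurableSet {ω | p i ω}) :
    Integrable (fun ω => ((s.filter (p · ω)).card : ℝ)) μ := by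
  simp_rw [natCast_card_filter_eq_sum_indicator]
  exact integrable_finsetSum _ fun i hi => (integrable_const 1).indicator (hp i hi)

lemma integral_card_filter (hp : ∀ i ∈ s, MeasurableSet {ω | p i ω}) :
    ∫ ω, ((s.filter (p · ω)).card : ℝ) ∂μ = ∑ i ∈ s, μ.real {ω | p i ω} := by
  simp_rw [natCast_card_filter_eq_sum_indicator]
  rw [integral_finsetSum _ fun i hi => (integrable_const 1).indicator (hp i hi)]
  exact Finset.sum_congr rfl fun i hi => integral_indicator_one (hp i hi)

end CardFilter

lemma SimpleGraph.two_mul_card_edgeFinset_le {V : Type*} [Fintype V] (G : SimpleGraph V)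
    [DecidableRel G.Adj] {Δ : ℕ} (hΔ : G.maxDegree ≤ Δ) :
    2 * G.edgeFinset.card ≤ Fintype.card V * Δ := by
  classical
  calc 2 * G.edgeFinset.card = ∑ v, G.degree v := (G.sum_degrees_eq_twice_card_edges).symm
    _ ≤ ∑ _v : V, Δ := Finset.sum_le_sum fun v _ => (G.degree_le_maxDegree v).trans hΔ
    _ = Fintype.card V * Δ := by simp

theorem expected_captured_difference (n : ℕ) (k : ℝ) (hk : 2 < k)
    (G : SimpleGraph (Fin n)) [DecidableRel G.Adj] (Δ : ℕ) (hΔ : G.maxDegree ≤ Δ)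
    (v : Fin n → EuclideanSpace ℝ (Fin n)) (hunit : ∀ i, ‖v i‖ = 1)
    (hvc : ∀ i j, G.Adj i j → ⟪v i, v j⟫ ≤ -1 / (k - 1))
    {Ω : Type*} [MeasurableSpace Ω] (μ : Measure Ω) [IsProbabilityMeasure μ]
    (r : Fin n → Ω → ℝ) (hmeas : ∀ i, Measurable (r i))
    (hindep : iIndepFun r μ)
    (hdist : ∀ i, μ.map (r i) = gaussianReal 0 1)
    (c : ℝ) (hc : 0 < c)
    (N : ℝ → ℝ) (hN : ∀ x, N x = (gaussianReal 0 1 (Set.Ici x)).toReal)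
    (n' m' : Ω → ℕ)
    (hn' : ∀ ω, n' ω =
      (Finset.univ.filter (fun i : Fin n => c ≤ ∑ j, v i j * r j ω)).card)
    (hm' : ∀ ω, m' ω =
      (G.edgeFinset.filter (fun e => ∀ i ∈ e, c ≤ ∑ j, v i j * r j ω)).card) :
    (n : ℝ) * (N c - (Δ : ℝ) / 2 * N (Real.sqrt (2 * (k - 1) / (k - 2)) * c)) ≤
      ∫ ω, ((n' ω : ℝ) - (m' ω : ℝ)) ∂μ := by
  set a := √(2 * (k - 1) / (k - 2))
  have hvertex (i : Fin n) : μ.real {ω | c ≤ ∑ j, v i j * r j ω} = N c := by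
    have hnorm : ‖v i‖₊ = 1 := NNReal.eq (by simpa using hunit i)
    rw [measureReal_def, hindep.measure_ge_eq_gaussianReal_Ici hmeas hdist, hnorm, one_pow, hN]
  have hedge : ∀ e ∈ G.edgeFinset,
      μ.real {ω | ∀ i ∈ e, c ≤ ∑ j, v i j * r j ω} ≤ N (a * c) := by
    intro e he
    induction e using Sym2.ind with
    | _ i j =>
    simp only [Sym2.mem_iff, forall_eq_or_imp, forall_eq, measureReal_def, hN]
    exact ENNReal.toReal_mono (measure_ne_top _ _) (hindep.measure_both_ge_le_of_inner_le
      hmeas hdist hk hc (hunit i) (hunit j) (hvc i j (by simpa using he)))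
  have hvertex_meas : ∀ i ∈ Finset.univ, MeasurableSet {ω | c ≤ ∑ j, v i j * r j ω} :=
    fun i _ => measurableSet_le measurable_const
      (Finset.measurable_sum _ fun j _ => (hmeas j).const_mul _)
  have hedge_meas : ∀ e ∈ G.edgeFinset, MeasurableSet {ω | ∀ i ∈ e, c ≤ ∑ j, v i j * r j ω} :=
    fun e _ => by
      simp only [Set.ofPred_forall]
      exact .iInter fun i => .iInter fun _ => hvertex_meas i (Finset.mem_univ i)
  simp_rw [hn', hm']
  rw [integral_sub (integrable_card_filter μ _ hvertex_meas)
      (integrable_card_filter μ _ hedge_meas),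
    integral_card_filter μ _ hvertex_meas, integral_card_filter μ _ hedge_meas,
    Finset.sum_congr rfl fun i _ => hvertex i, Finset.sum_const, Finset.card_univ,
    Fintype.card_fin, nsmul_eq_mul]
  have hedge_sum := Finset.sum_le_card_nsmul _ _ _ hedge
  have hN_nonneg : 0 ≤ N (a * c) := by rw [hN]; exact ENNReal.toReal_nonneg
  have hcard : (2 * G.edgeFinset.card : ℝ) ≤ n * Δ := by
    exact_mod_cast Fintype.card_fin n ▸ G.two_mul_card_edgeFinset_le hΔ
  rw [nsmul_eq_mul] at hedge_sum
  nlinarith
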